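/- The graph NM (vertices: nonsingular symmetric 3×3 matrices over GF(2); distinct A, B adjacent iff det(A+B)=0) is isomorphic to the following graph G: the vertices of G are the nonzero vectors v ∈ GF(2)⁶ with Q(v) = 0 and v ∉ N, where Q(x) = x₁x₆ + x₂x₅ + x₃x₄ and N = {w ∈ GF(2)⁶ : w₁ = w₂ = w₃ = 0}; two distinct vertices u, v of G are adjacent if and only if u+v ∈ N or Q(u+v) = 1 (i.e., the line joining u and v either meets N or is secant to the quadric in exactly the two points u and v). -/

import Mathlib

open scoped Classical

/-- The graph `NM`: vertices are the symmetric `3 × 3` matrices over `GF(2)` with nonzero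
determinant; two distinct vertices are adjacent iff their sum is singular. -/
noncomputable def NM :
    SimpleGraph {M : Matrix (Fin 3) (Fin 3) (ZMod 2) // M.IsSymm ∧ M.det ≠ 0} where
  Adj A B := A ≠ B ∧ (A.1 + B.1).det = 0
  symm := ⟨fun A B h => ⟨h.1.symm, by rw [add_comm]; exact h.2⟩⟩
  loopless := ⟨fun A h => h.1 rfl⟩

/-- The hyperbolic quadratic form `Q(x) = x₁x₆ + x₂x₅ + x₃x₄` on `GF(2)⁶`. -/
def quadQ (x : Fin 6 → ZMod 2) : ZMod 2 :=
  x 0 * x 5 + x 1 * x 4 + x 2 * x 3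

/-- Membership in the nuclei plane `N : x₁ = x₂ = x₃ = 0`. -/
def memN (x : Fin 6 → ZMod 2) : Prop :=
  x 0 = 0 ∧ x 1 = 0 ∧ x 2 = 0

/-- The graph `G`: vertices are the nonzero isotropic vectors of `Q` outside the plane `N`;
two distinct vertices `u, v` are adjacent iff the third point `u + v` of the line `uv`
lies in `N`, or the line `uv` is secant to the quadric (`Q(u+v) = 1`). -/
noncomputable def Gquad :
    SimpleGraph {v : Fin 6 → ZMod 2 // v ≠ 0 ∧ quadQ v = 0 ∧ ¬ memN v} where
  Adj u v := u ≠ v ∧ (memN (u.1 + v.1) ∨ quadQ (u.1 + v.1) = 1)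
  symm := ⟨fun u v h => ⟨h.1.symm, by rw [add_comm]; exact h.2⟩⟩
  loopless := ⟨fun u h => h.1 rfl⟩

/-!
Both graphs are of the same shape: the vertices are the elements of a subset `S` of a
`GF(2)`-vector space, two of them adjacent iff they are distinct and their sum lies outside `S`
(for `G`, the sum of distinct vectors is nonzero, and `Q(u + v) ≠ 0` means `Q(u + v) = 1`). So an
additive bijection carrying one vertex set onto the other is a graph isomorphism.

Over `GF(2)` the determinant of a symmetric matrix with diagonal `a, b, c` and entries `d, e, f`
opposite to `c, b, a` is `abc + af + be + cd`. Sending `x` to the matrix with diagonal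
`(x₁, x₂, x₃)` and `d = x₄ + x₁ + x₃`, `e = x₅ + x₂ + x₃`, `f = x₆ + x₁ + x₂` turns it into
`Q(x) + abc + a + b + c + ab + bc + ca`, i.e. `Q(x)` plus the indicator of `x ∉ N`; and `Q`
vanishes on `N`. Hence this linear bijection `GF(2)⁶ → Sym₃(GF(2))` maps `Q⁺(5,2) \ N` exactly
onto the nonsingular matrices.
-/

namespace SimpleGraph

variable {V W : Type*} [AddCommMonoid V] [AddCommMonoid W]

def sumOutside (p : V → Prop) : SimpleGraph {v // p v} where
  Adj u v := u ≠ v ∧ ¬ p (u.1 + v.1)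
  symm := ⟨fun u v h => ⟨h.1.symm, by rw [add_comm]; exact h.2⟩⟩
  loopless := ⟨fun u h => h.1 rfl⟩

noncomputable def Iso.sumOutside {p : V → Prop} {q : W → Prop} (f : V →+ W)
    (hf : Function.Injective f) (hq : ∀ w, q w → ∃ v, f v = w) (hpq : ∀ v, q (f v) ↔ p v) :
    sumOutside p ≃g sumOutside q where
  toEquiv := Equiv.ofBijective (fun v => ⟨f v, (hpq v).2 v.2⟩)
    ⟨fun u v h => Subtype.ext (hf (congrArg Subtype.val h)), fun w =>
      let ⟨v, hv⟩ := hq w.1 w.2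
      ⟨⟨v, (hpq v).1 (hv ▸ w.2)⟩, Subtype.ext hv⟩⟩
  map_rel_iff' {u v} := by
    change ((⟨f u, (hpq u).2 u.2⟩ : {w // q w}) ≠ ⟨f v, (hpq v).2 v.2⟩ ∧ ¬ q (f u + f v)) ↔ _
    rw [Ne, Subtype.mk.injEq, hf.eq_iff, Subtype.val_inj, ← map_add, hpq]
    rfl

end SimpleGraph

theorem ZMod.ne_zero_iff_eq_one_of_two (y : ZMod 2) : y ≠ 0 ↔ y = 1 := by
  revert y; decide

theorem Matrix.det_eq_of_isSymm_of_zmod_two {M : Matrix (Fin 3) (Fin 3) (ZMod 2)}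
    (hM : M.IsSymm) :
    M.det = M 0 0 * M 1 1 * M 2 2 + M 0 0 * M 1 2 + M 1 1 * M 0 2 + M 2 2 * M 0 1 := by
  rw [Matrix.det_fin_three, hM.apply 0 1, hM.apply 0 2, hM.apply 1 2]
  linear_combination (norm := ring_nf) -M 0 0 * ZMod.pow_card (M 1 2) -
    M 1 1 * ZMod.pow_card (M 0 2) - M 2 2 * ZMod.pow_card (M 0 1)
  reduce_mod_char

def toSymm : (Fin 6 → ZMod 2) →+ Matrix (Fin 3) (Fin 3) (ZMod 2) :=
  AddMonoidHom.mk' (fun x => !![x 0, x 3 + x 0 + x 2, x 4 + x 1 + x 2;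
      x 3 + x 0 + x 2, x 1, x 5 + x 0 + x 1;
      x 4 + x 1 + x 2, x 5 + x 0 + x 1, x 2])
    fun x y => by ext i j; fin_cases i <;> fin_cases j <;> simp <;> ring

def ofSymm (M : Matrix (Fin 3) (Fin 3) (ZMod 2)) : Fin 6 → ZMod 2 :=
  ![M 0 0, M 1 1, M 2 2, M 0 1 + M 0 0 + M 2 2, M 0 2 + M 1 1 + M 2 2, M 1 2 + M 0 0 + M 1 1]

theorem toSymm_isSymm (x : Fin 6 → ZMod 2) : (toSymm x).IsSymm := by
  ext i j; fin_cases i <;> fin_cases j <;> rfl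

theorem ofSymm_toSymm (x : Fin 6 → ZMod 2) : ofSymm (toSymm x) = x := by
  ext i; fin_cases i <;> simp [ofSymm, toSymm] <;> ring_nf <;> reduce_mod_char

theorem toSymm_ofSymm {M : Matrix (Fin 3) (Fin 3) (ZMod 2)} (hM : M.IsSymm) :
    toSymm (ofSymm M) = M := by
  ext i j
  fin_cases i <;> fin_cases j <;>
    simp [ofSymm, toSymm, ← hM.apply 0 1, ← hM.apply 0 2, ← hM.apply 1 2] <;> ring_nf <;>
    reduce_mod_char

theorem det_toSymm (x : Fin 6 → ZMod 2) :
    (toSymm x).det = quadQ x + (1 + (1 + x 0) * (1 + x 1) * (1 + x 2)) := by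
  rw [Matrix.det_eq_of_isSymm_of_zmod_two (toSymm_isSymm x)]
  simp only [toSymm, AddMonoidHom.mk'_apply, quadQ, Matrix.of_apply, Matrix.cons_val',
    Matrix.cons_val_zero, Matrix.cons_val_one, Matrix.cons_val_two, Matrix.empty_val',
    Matrix.cons_val_fin_one, Matrix.head_cons, Matrix.tail_cons, Matrix.head_fin_const]
  linear_combination (norm := ring_nf) ZMod.pow_card (x 0) + ZMod.pow_card (x 1) +
    ZMod.pow_card (x 2)
  reduce_mod_char

theorem one_add_mul_one_add_mul_one_add_eq_zero_iff (x : Fin 6 → ZMod 2) :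
    (1 + x 0) * (1 + x 1) * (1 + x 2) = 0 ↔ ¬ memN x := by
  simp only [mul_eq_zero, CharTwo.add_eq_zero, eq_comm (a := (1 : ZMod 2)),
    ← ZMod.ne_zero_iff_eq_one_of_two, memN, not_and_or, or_assoc]

theorem quadQ_eq_zero_of_memN {x : Fin 6 → ZMod 2} (hx : memN x) : quadQ x = 0 := by
  simp [quadQ, hx.1, hx.2.1, hx.2.2]

theorem det_toSymm_ne_zero_iff (x : Fin 6 → ZMod 2) :
    (toSymm x).det ≠ 0 ↔ x ≠ 0 ∧ quadQ x = 0 ∧ ¬ memN x := by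
  rw [det_toSymm]
  by_cases hN : memN x
  · have hprod : (1 + x 0) * (1 + x 1) * (1 + x 2) = 1 := by
      simp [hN.1, hN.2.1, hN.2.2]
    simp [hN, hprod, quadQ_eq_zero_of_memN hN, CharTwo.add_self_eq_zero]
  · have hx : x ≠ 0 := fun h => hN (by simp [memN, h])
    rw [(one_add_mul_one_add_mul_one_add_eq_zero_iff x).2 hN, add_zero,
      ZMod.ne_zero_iff_eq_one_of_two]
    simp [hx, hN]

theorem NM_eq_sumOutside :
    NM = SimpleGraph.sumOutside fun M : Matrix (Fin 3) (Fin 3) (ZMod 2) =>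
      M.IsSymm ∧ M.det ≠ 0 := by
  ext A B
  simp only [NM, SimpleGraph.sumOutside, A.2.1.add B.2.1, true_and, not_not]

theorem Gquad_eq_sumOutside :
    Gquad = SimpleGraph.sumOutside fun v => v ≠ 0 ∧ quadQ v = 0 ∧ ¬ memN v := by
  ext u v
  refine and_congr_right fun huv => ?_
  have hsum : u.1 + v.1 ≠ 0 := CharTwo.add_eq_zero.not.2 (Subtype.val_injective.ne huv)
  rw [← ZMod.ne_zero_iff_eq_one_of_two]
  tauto

/-- The graph `NM` is isomorphic to the graph `Gquad` on `Q⁺(5,2) \ N`. -/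
theorem NM_iso_Gquad : Nonempty (NM ≃g Gquad) := by
  rw [NM_eq_sumOutside, Gquad_eq_sumOutside]
  exact ⟨(SimpleGraph.Iso.sumOutside toSymm (Function.LeftInverse.injective ofSymm_toSymm)
    (fun M hM => ⟨ofSymm M, toSymm_ofSymm hM.1⟩)
    fun x => (and_iff_right (toSymm_isSymm x)).trans (det_toSymm_ne_zero_iff x)).symm⟩
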